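/- Let N be a rooted binary phylogenetic network on X, and let T be a phylogenetic X-tree. Then T is displayed by N if and only if there exists a switching of N that yields T. -/

import Mathlib

noncomputable section
attribute [local instance] Classical.propDecidable

/-! ### Directed graphs -/

structure Dgraph (V : Type) where
  verts : Finset V
  edges : Finset (V × V)
  edges_sub : ∀ e ∈ edges, e.1 ∈ verts ∧ e.2 ∈ verts

namespace Dgraph

variable {V : Type}

def edgeRel (G : Dgraph V) (u v : V) : Prop := (u, v) ∈ G.edges

def inDeg (G : Dgraph V) (v : V) : ℕ := (G.edges.filter (fun e => e.2 = v)).card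

def outDeg (G : Dgraph V) (v : V) : ℕ := (G.edges.filter (fun e => e.1 = v)).card

def Reaches (G : Dgraph V) (u v : V) : Prop := Relation.ReflTransGen G.edgeRel u v

def Acyclic (G : Dgraph V) : Prop := ∀ u v, G.edgeRel u v → ¬ G.Reaches v u

def leaves (G : Dgraph V) : Finset V := G.verts.filter (fun v => G.outDeg v = 0)

def IsSubgraph (H G : Dgraph V) : Prop := H.verts ⊆ G.verts ∧ H.edges ⊆ G.edges

def adj (G : Dgraph V) (u v : V) : Prop := (u, v) ∈ G.edges ∨ (v, u) ∈ G.edges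

def Connected (G : Dgraph V) : Prop :=
  ∀ u ∈ G.verts, ∀ v ∈ G.verts, Relation.ReflTransGen G.adj u v

def deleteVert (G : Dgraph V) (x : V) : Dgraph V where
  verts := G.verts.erase x
  edges := G.edges.filter (fun e => e.1 ≠ x ∧ e.2 ≠ x)
  edges_sub := by
    intro e he
    simp only [Finset.mem_filter] at he
    obtain ⟨he1, hx1, hx2⟩ := he
    exact ⟨Finset.mem_erase.mpr ⟨hx1, (G.edges_sub e he1).1⟩,
           Finset.mem_erase.mpr ⟨hx2, (G.edges_sub e he1).2⟩⟩

/-- A graph is biconnected if it is connected and cannot be disconnected by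
deleting exactly one of its vertices. -/
def Biconnected (G : Dgraph V) : Prop :=
  G.Connected ∧ ∀ x ∈ G.verts, (G.deleteVert x).Connected

/-- A biconnected component: a maximal biconnected subgraph. -/
def IsBicomp (G H : Dgraph V) : Prop :=
  H.IsSubgraph G ∧ H.Biconnected ∧
  ∀ H' : Dgraph V, H'.IsSubgraph G → H'.Biconnected → H.IsSubgraph H' → H' = H

/-- One subdivision step: replace an edge `(u,w)` by `(u,v)`, `(v,w)` for a new vertex `v`. -/
def SubdivStep (G G' : Dgraph V) : Prop :=
  ∃ u w v, (u, w) ∈ G.edges ∧ v ∉ G.verts ∧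
    G'.verts = insert v G.verts ∧
    G'.edges = insert (u, v) (insert (v, w) (G.edges.erase (u, w)))

/-- `S.IsSubdivisionOf G` : `S` can be obtained from `G` by repeatedly subdividing edges
(`G` is a subdivision of itself). -/
def IsSubdivisionOf (S G : Dgraph V) : Prop := Relation.ReflTransGen SubdivStep G S

end Dgraph

/-! ### Rooted binary phylogenetic networks -/

structure PhyloNet (V : Type) (X : Finset V) where
  G : Dgraph V
  root : V
  root_mem : root ∈ G.verts
  root_inDeg : G.inDeg root = 0
  root_outDeg : G.outDeg root = 1
  acyclic : G.Acyclic
  reach : ∀ v ∈ G.verts, G.Reaches root v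
  degrees : ∀ v ∈ G.verts, v ≠ root →
      (G.inDeg v = 1 ∧ G.outDeg v = 2) ∨ (G.inDeg v = 2 ∧ G.outDeg v = 1) ∨
      (G.inDeg v = 1 ∧ G.outDeg v = 0)
  leaves_eq : G.leaves = X
  Xnonempty : X.Nonempty

namespace PhyloNet

variable {V : Type} {X : Finset V}

def IsRetic (N : PhyloNet V X) (v : V) : Prop := N.G.inDeg v = 2

/-- A rooted binary phylogenetic `X`-tree: a network with no reticulations. -/
def IsTreeNet (N : PhyloNet V X) : Prop := ∀ v ∈ N.G.verts, N.G.inDeg v ≤ 1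

/-- `S` is an embedding of `T` in `N`: a subgraph of `N` containing the root of `N`
that is a subdivision of `T`. -/
def IsEmbedding (N : PhyloNet V X) (T : PhyloNet V X) (S : Dgraph V) : Prop :=
  S.IsSubgraph N.G ∧ N.root ∈ S.verts ∧ S.IsSubdivisionOf T.G

/-- `T` is displayed by `N`. -/
def Displays (N T : PhyloNet V X) : Prop :=
  T.IsTreeNet ∧ ∃ S : Dgraph V, N.IsEmbedding T S

/-- A blob of `N`: a biconnected component with at least one reticulation. -/
def IsBlob (N : PhyloNet V X) (B : Dgraph V) : Prop :=
  Dgraph.IsBicomp N.G B ∧ ∃ v ∈ B.verts, N.IsRetic v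

/-- `N` is level-`k`: every biconnected component has at most `k` reticulations. -/
def IsLevel (N : PhyloNet V X) (k : ℕ) : Prop :=
  ∀ H : Dgraph V, Dgraph.IsBicomp N.G H →
    (H.verts.filter (fun v => N.IsRetic v)).card ≤ k

def numRetic (N : PhyloNet V X) : ℕ := (N.G.verts.filter (fun v => N.IsRetic v)).card

/-- Children of a blob `B`: vertices outside `B` that are children of vertices of `B`. -/
def blobChildren (N : PhyloNet V X) (B : Dgraph V) : Finset V :=
  N.G.verts.filter (fun v => v ∉ B.verts ∧ ∃ u ∈ B.verts, (u, v) ∈ N.G.edges)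

/-- Cluster of a vertex: its set of descendant leaves. -/
def cl (N : PhyloNet V X) (v : V) : Finset V := X.filter (fun x => N.G.Reaches v x)

end PhyloNet

/-- Source of a blob: its unique vertex of in-degree zero and out-degree two within the blob. -/
def IsSource {V : Type} (B : Dgraph V) (s : V) : Prop :=
  s ∈ B.verts ∧ B.inDeg s = 0 ∧ B.outDeg s = 2

/-! ### Characters and parsimony -/

/-- A character on `X`: a function that is surjective from `X` onto the set `C` of states. -/
def IsCharacter {V C : Type} (X : Finset V) (f : V → C) : Prop :=
  ∀ c : C, ∃ x ∈ X, f x = c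

/-- An extension of a character `f` (agrees with `f` on the leaves `X`). -/
def IsExtension {V C : Type} (X : Finset V) (f F : V → C) : Prop :=
  ∀ x ∈ X, F x = f x

/-- Changing number of an assignment `F` on a digraph. -/
def ch {V C : Type} (F : V → C) (G : Dgraph V) : ℕ :=
  (G.edges.filter (fun e => F e.1 ≠ F e.2)).card

/-- Parsimony score of `f` on `G` (leaves `X`). -/
def PS {V C : Type} (X : Finset V) (f : V → C) (G : Dgraph V) : ℕ :=
  sInf {n | ∃ F : V → C, IsExtension X f F ∧ ch F G = n}

/-- Softwired parsimony score of a single character on a network. -/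
def PSsw {V C : Type} {X : Finset V} (N : PhyloNet V X) (f : V → C) : ℕ :=
  sInf {n | ∃ T : PhyloNet V X, N.Displays T ∧ PS X f T.G = n}

/-! ### Switchings -/

def reticEdges {V : Type} {X : Finset V} (N : PhyloNet V X) : Finset (V × V) :=
  N.G.edges.filter (fun e => N.G.inDeg e.2 = 2)

def IsSwitching {V : Type} {X : Finset V} (N : PhyloNet V X) (R : Finset (V × V)) : Prop :=
  R ⊆ reticEdges N ∧
  ∀ v ∈ N.G.verts, N.IsRetic v → (R.filter (fun e => e.2 = v)).card = 1

def switchGraph {V : Type} {X : Finset V} (N : PhyloNet V X) (R : Finset (V × V)) : Dgraph V where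
  verts := N.G.verts
  edges := N.G.edges \ (reticEdges N \ R)
  edges_sub := by
    intro e he
    exact N.G.edges_sub e (Finset.mem_sdiff.mp he).1

/-- Suppressing a vertex of in-degree one and out-degree one. -/
def SuppressStep {V : Type} (G G' : Dgraph V) : Prop :=
  ∃ u v w, (u, v) ∈ G.edges ∧ (v, w) ∈ G.edges ∧ G.inDeg v = 1 ∧ G.outDeg v = 1 ∧
    u ≠ v ∧ w ≠ v ∧
    G'.verts = G.verts.erase v ∧
    G'.edges = insert (u, w) ((G.edges.erase (u, v)).erase (v, w))

/-- Deleting a vertex of out-degree zero that is not a leaf in `X`. -/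
def DeleteLeafStep {V : Type} (X : Finset V) (G G' : Dgraph V) : Prop :=
  ∃ v ∈ G.verts, v ∉ X ∧ G.outDeg v = 0 ∧
    G'.verts = G.verts.erase v ∧
    G'.edges = G.edges.filter (fun e => e.2 ≠ v)

def CleanupStep {V : Type} (X : Finset V) (G G' : Dgraph V) : Prop :=
  SuppressStep G G' ∨ DeleteLeafStep X G G'

/-- The switching `R` yields the phylogenetic tree `T`. -/
def Yields {V : Type} {X : Finset V} (N : PhyloNet V X) (R : Finset (V × V))
    (T : PhyloNet V X) : Prop :=
  T.IsTreeNet ∧ Relation.ReflTransGen (CleanupStep X) (switchGraph N R) T.G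

/-- Switching distance `h(N) - |R ∩ R'|`. -/
def switchDist {V : Type} {X : Finset V} (N : PhyloNet V X) (R R' : Finset (V × V)) : ℕ :=
  N.numRetic - (R ∩ R').card

/-! ### rSPR -/

def relPow {α : Type} (r : α → α → Prop) : ℕ → α → α → Prop
  | 0, a, b => a = b
  | n + 1, a, b => ∃ c, r a c ∧ relPow r n c b

/-- A single rooted subtree prune and regraft operation. -/
def rSPRStep {V : Type} {X : Finset V} (T T' : PhyloNet V X) : Prop :=
  ∃ u v p c a b u',
    (u, v) ∈ T.G.edges ∧ u ≠ T.root ∧ v ≠ T.root ∧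
    (p, u) ∈ T.G.edges ∧ (u, c) ∈ T.G.edges ∧ c ≠ v ∧
    (a, b) ∈ insert (p, c) (((T.G.edges.erase (u, v)).erase (p, u)).erase (u, c)) ∧
    ¬ T.G.Reaches v a ∧ ¬ T.G.Reaches v b ∧
    u' ∉ T.G.verts.erase u ∧
    T'.root = T.root ∧
    T'.G.verts = insert u' (T.G.verts.erase u) ∧
    T'.G.edges = insert (a, u') (insert (u', b) (insert (u', v)
      ((insert (p, c) (((T.G.edges.erase (u, v)).erase (p, u)).erase (u, c))).erase (a, b))))

/-- rSPR distance: minimum number of rSPR operations transforming `T` into `T'`. -/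
def rSPRdist {V : Type} {X : Finset V} (T T' : PhyloNet V X) : ℕ :=
  sInf {n | relPow rSPRStep n T T'}

/-! ### Root paths -/

/-- `(u,v)` is an edge of the root path of `G` (with root `r`). -/
def rootPathEdge {V : Type} (G : Dgraph V) (r u v : V) : Prop :=
  (u, v) ∈ G.edges ∧ G.outDeg u = 1 ∧
  Relation.ReflTransGen (fun a b => (a, b) ∈ G.edges ∧ G.outDeg a = 1) r u

/-- `F` has no character-state transition on any edge of the root path. -/
def NoRootPathChange {V C : Type} (G : Dgraph V) (r : V) (F : V → C) : Prop :=
  ∀ u v, rootPathEdge G r u v → F u = F v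

/-! ### Informative blobs -/

/-- `ind(F,B,S) = 0`: `F` assigns the same state to all children of the blob `B`. -/
def SameOnChildren {V C : Type} {X : Finset V} (N : PhyloNet V X) (B : Dgraph V)
    (F : V → C) : Prop :=
  ∀ a ∈ N.blobChildren B, ∀ b ∈ N.blobChildren B, F a = F b

/-- The number of blobs `B` of `N` with `ind(F,B,S) = 1`. -/
def infBlobCount {V C : Type} {X : Finset V} (N : PhyloNet V X) (F : V → C) : ℕ :=
  Set.ncard {B : Dgraph V | N.IsBlob B ∧ ¬ SameOnChildren N B F}

/-- `b(f,N,S)`: the number of informative blobs of `N` relative to `S` and `f`. -/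
def blobScore {V C : Type} {X : Finset V} (N : PhyloNet V X) (f : V → C) (S : Dgraph V) : ℕ :=
  sInf {m | ∃ F : V → C, IsExtension X f F ∧ ch F S = PS X f S ∧ infBlobCount N F = m}

/-- `F` realises `b(f,N,S)`. -/
def Realises {V C : Type} {X : Finset V} (N : PhyloNet V X) (f : V → C) (S : Dgraph V)
    (F : V → C) : Prop :=
  IsExtension X f F ∧ ch F S = PS X f S ∧ infBlobCount N F = blobScore N f S

/-- A blob `B` is non-informative relative to `S` and `f`. -/
def NonInformative {V C : Type} {X : Finset V} (N : PhyloNet V X) (B S : Dgraph V)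
    (f : V → C) : Prop :=
  ∃ F : V → C, IsExtension X f F ∧ ch F S = PS X f S ∧ SameOnChildren N B F

/-! ### Blob reduction / cluster tree pairs -/

/-- Longest-path distance from the root. -/
def distFromRoot {V : Type} {X : Finset V} (N : PhyloNet V X) (v : V) : ℕ :=
  sSup {n | relPow N.G.edgeRel n N.root v}

/-- The subgraph of `S` rooted at `s`. -/
def subAt {V : Type} (S : Dgraph V) (s : V) : Dgraph V where
  verts := insert s (S.verts.filter (fun v => S.Reaches s v))
  edges := S.edges.filter (fun e => S.Reaches s e.1)
  edges_sub := by
    intro e he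
    simp only [Finset.mem_filter] at he
    obtain ⟨he1, hr⟩ := he
    refine ⟨Finset.mem_insert.mpr (Or.inr (Finset.mem_filter.mpr ⟨(S.edges_sub e he1).1, hr⟩)),
      Finset.mem_insert.mpr (Or.inr (Finset.mem_filter.mpr ⟨(S.edges_sub e he1).2, ?_⟩))⟩
    exact hr.tail (show S.edgeRel e.1 e.2 from he1)

/-- `S(Y)`: the subtree of `S` rooted at `s` together with a new root `ρY` and edge `(ρY, s)`. -/
def clusterY {V : Type} (S : Dgraph V) (s ρY : V) : Dgraph V where
  verts := insert ρY (subAt S s).verts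
  edges := insert (ρY, s) (subAt S s).edges
  edges_sub := by
    intro e he
    rcases Finset.mem_insert.mp he with h | h
    · subst h
      exact ⟨Finset.mem_insert_self _ _,
        Finset.mem_insert.mpr (Or.inr (Finset.mem_insert_self _ _))⟩
    · have h2 := (subAt S s).edges_sub e h
      exact ⟨Finset.mem_insert.mpr (Or.inr h2.1), Finset.mem_insert.mpr (Or.inr h2.2)⟩

/-- `S(Ȳ)`: `S` with the subtree rooted at `s` replaced by a single new leaf `y`. -/
def clusterYbar {V : Type} (S : Dgraph V) (s y : V) : Dgraph V where
  verts := insert y (S.verts.filter (fun v => ¬ S.Reaches s v))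
  edges := (S.edges.filter (fun e => ¬ S.Reaches s e.1 ∧ ¬ S.Reaches s e.2)) ∪
           ((S.edges.filter (fun e => e.2 = s ∧ ¬ S.Reaches s e.1)).image (fun e => (e.1, y)))
  edges_sub := by
    intro e he
    rcases Finset.mem_union.mp he with h | h
    · simp only [Finset.mem_filter] at h
      exact ⟨Finset.mem_insert.mpr (Or.inr (Finset.mem_filter.mpr ⟨(S.edges_sub _ h.1).1, h.2.1⟩)),
        Finset.mem_insert.mpr (Or.inr (Finset.mem_filter.mpr ⟨(S.edges_sub _ h.1).2, h.2.2⟩))⟩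
    · simp only [Finset.mem_image, Finset.mem_filter] at h
      obtain ⟨a, ⟨ha, _, hnr⟩, hae⟩ := h
      constructor
      · rw [← hae]
        exact Finset.mem_insert.mpr (Or.inr (Finset.mem_filter.mpr ⟨(S.edges_sub _ ha).1, hnr⟩))
      · rw [← hae]
        exact Finset.mem_insert_self _ _

/-- A pair of cluster extensions with respect to `f`. -/
def ClusterExtPair {V C : Type} (X Y : Finset V) (y ρY : V) (f FY FYb : V → C) : Prop :=
  (∀ x ∈ Y, FY x = f x) ∧ (∀ x ∈ X \ Y, FYb x = f x) ∧ FYb y = FY ρY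

/-! ### Parental trees -/

/-- A vertex of `U*(N)`: a directed path in `N` starting at the root. -/
def UstarVert {V : Type} {X : Finset V} (N : PhyloNet V X) (p : List V) : Prop :=
  p ≠ [] ∧ p.head? = some N.root ∧ p.Chain' (fun a b => (a, b) ∈ N.G.edges)

/-- An edge of `U*(N)`: `q` extends `p` by one additional edge of `N`. -/
def UstarEdge {V : Type} {X : Finset V} (N : PhyloNet V X) (p q : List V) : Prop :=
  UstarVert N p ∧ UstarVert N q ∧ ∃ w, q = p ++ [w]

/-- `T` is a parental tree of `N`: obtained from a subgraph of `U*(N)` by suppressing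
in-degree-one out-degree-one vertices; its leaves are labelled bijectively by `X`
via the endpoint of the corresponding path. -/
def IsParentalTree {V : Type} {X : Finset V} (N : PhyloNet V X) {L : Finset (List V)}
    (T : PhyloNet (List V) L) : Prop :=
  T.IsTreeNet ∧
  (∀ x ∈ X, ∃! p, p ∈ L ∧ p.getLast? = some x) ∧
  (∀ p ∈ L, ∃ x ∈ X, p.getLast? = some x) ∧
  ∃ H : Dgraph (List V),
    (∀ p ∈ H.verts, UstarVert N p) ∧
    (∀ e ∈ H.edges, UstarEdge N e.1 e.2) ∧
    Relation.ReflTransGen SuppressStep H T.G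

/-- Parsimony score of a character `f` on a tree whose leaves are labelled by
elements of `X` via the last vertex of the corresponding path. -/
def PSlab {V C : Type} (L : Finset (List V)) (f : V → C) (G : Dgraph (List V)) : ℕ :=
  sInf {n | ∃ F : List V → C,
    (∀ p ∈ L, ∀ x, p.getLast? = some x → F p = f x) ∧ ch F G = n}

/-- Parental parsimony score. -/
def PSpa {V C : Type} {X : Finset V} (N : PhyloNet V X) (f : V → C) : ℕ :=
  sInf {n | ∃ (L : Finset (List V)) (T : PhyloNet (List V) L),
    IsParentalTree N T ∧ PSlab L f T.G = n}

/-! ### Undirected graphs, semi-directed networks -/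

structure UGraph (V : Type) where
  verts : Finset V
  edges : Finset (Sym2 V)
  edges_sub : ∀ e ∈ edges, ∀ v ∈ e, v ∈ verts
  no_loops : ∀ e ∈ edges, ¬ e.IsDiag

namespace UGraph

variable {V : Type}

def adj (G : UGraph V) (u v : V) : Prop := s(u, v) ∈ G.edges

def degree (G : UGraph V) (v : V) : ℕ := (G.edges.filter (fun e => v ∈ e)).card

def Connected (G : UGraph V) : Prop :=
  ∀ u ∈ G.verts, ∀ v ∈ G.verts, Relation.ReflTransGen G.adj u v

end UGraph

/-- An unrooted binary phylogenetic `X`-tree: a connected undirected acyclic graph with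
leaf set `X` whose inner vertices all have degree three. -/
structure UTree (V : Type) (X : Finset V) where
  g : UGraph V
  connected : g.Connected
  card_eq : g.verts.card = g.edges.card + 1
  leaves_eq : g.verts.filter (fun v => g.degree v = 1) = X
  degree_cases : ∀ v ∈ g.verts, g.degree v = 1 ∨ g.degree v = 3

def USubdivStep {V : Type} (G G' : UGraph V) : Prop :=
  ∃ u w v, s(u, w) ∈ G.edges ∧ v ∉ G.verts ∧
    G'.verts = insert v G.verts ∧
    G'.edges = insert s(u, v) (insert s(v, w) (G.edges.erase s(u, w)))

def IsUSubdivisionOf {V : Type} (S G : UGraph V) : Prop :=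
  Relation.ReflTransGen USubdivStep G S

/-- A binary semi-directed network: directed (reticulation) edges and undirected edges. -/
structure SemiDir (V : Type) where
  verts : Finset V
  dirE : Finset (V × V)
  undirE : Finset (Sym2 V)
  dir_sub : ∀ e ∈ dirE, e.1 ∈ verts ∧ e.2 ∈ verts
  undir_sub : ∀ e ∈ undirE, ∀ v ∈ e, v ∈ verts
  dir_noloop : ∀ e ∈ dirE, e.1 ≠ e.2
  undir_noloop : ∀ e ∈ undirE, ¬ e.IsDiag

namespace SemiDir

variable {V : Type}

/-- The underlying undirected graph. -/
def und (Ns : SemiDir V) : UGraph V where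
  verts := Ns.verts
  edges := Ns.undirE ∪ Ns.dirE.image (fun e => s(e.1, e.2))
  edges_sub := by
    intro e he v hv
    rcases Finset.mem_union.mp he with h | h
    · exact Ns.undir_sub e h v hv
    · obtain ⟨a, ha, hae⟩ := Finset.mem_image.mp h
      rw [← hae] at hv
      rcases Sym2.mem_iff.mp hv with h1 | h1
      · rw [h1]; exact (Ns.dir_sub a ha).1
      · rw [h1]; exact (Ns.dir_sub a ha).2
  no_loops := by
    intro e he
    rcases Finset.mem_union.mp he with h | h
    · exact Ns.undir_noloop e h
    · obtain ⟨a, ha, hae⟩ := Finset.mem_image.mp h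
      rw [← hae]
      simp only [Sym2.isDiag_iff_proj_eq]
      exact Ns.dir_noloop a ha

def isRetic (Ns : SemiDir V) (v : V) : Prop :=
  (Ns.dirE.filter (fun e => e.2 = v)).card = 2

/-- An unrooted phylogenetic `X`-tree is displayed by a semi-directed network. -/
def Displays {X : Finset V} (Ns : SemiDir V) (Tu : UTree V X) : Prop :=
  ∃ S : SemiDir V, S.verts ⊆ Ns.verts ∧ S.dirE ⊆ Ns.dirE ∧ S.undirE ⊆ Ns.undirE ∧
    (∀ v : V, Ns.isRetic v → (S.dirE.filter (fun e => e.2 = v)).card ≤ 1) ∧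
    IsUSubdivisionOf S.und Tu.g

end SemiDir

/-- `Nr` is a rooted partner of `Ns`: `Ns` is obtained from `Nr` by deleting the root,
suppressing the child of the root, and omitting the direction of every
non-reticulation edge. -/
def RootedPartner {V : Type} {X : Finset V} (Nr : PhyloNet V X) (Ns : SemiDir V) : Prop :=
  ∃ v w w', (Nr.root, v) ∈ Nr.G.edges ∧ (v, w) ∈ Nr.G.edges ∧ (v, w') ∈ Nr.G.edges ∧ w ≠ w' ∧
    Ns.verts = (Nr.G.verts.erase Nr.root).erase v ∧
    Ns.dirE = Nr.G.edges.filter (fun e => Nr.G.inDeg e.2 = 2 ∧ e.1 ≠ v) ∧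
    Ns.undirE = insert s(w, w')
      ((Nr.G.edges.filter (fun e => Nr.G.inDeg e.2 ≠ 2 ∧ e.1 ≠ Nr.root ∧ e.1 ≠ v)).image
        (fun e => s(e.1, e.2)))

/-- `Tu` is obtained from the rooted tree `T` by deleting the root and suppressing
its child. -/
def UnrootOf {V : Type} {X : Finset V} (T : PhyloNet V X) (Tu : UTree V X) : Prop :=
  ∃ v w w', (T.root, v) ∈ T.G.edges ∧ (v, w) ∈ T.G.edges ∧ (v, w') ∈ T.G.edges ∧ w ≠ w' ∧
    Tu.g.verts = (T.G.verts.erase T.root).erase v ∧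
    Tu.g.edges = insert s(w, w')
      ((T.G.edges.filter (fun e => e.1 ≠ T.root ∧ e.1 ≠ v)).image (fun e => s(e.1, e.2)))

/-- Changing number on an undirected graph. -/
def chU {V C : Type} (F : V → C) (G : UGraph V) : ℕ :=
  (G.edges.filter (fun e => Sym2.lift ⟨fun a b => F a ≠ F b, fun a b => propext ne_comm⟩ e)).card

/-- Parsimony score on an undirected graph with leaf set `X`. -/
def PSU {V C : Type} (X : Finset V) (f : V → C) (G : UGraph V) : ℕ :=
  sInf {n | ∃ F : V → C, IsExtension X f F ∧ chU F G = n}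

/-- Softwired parsimony score of a character on a semi-directed network. -/
def PSswU {V C : Type} (X : Finset V) (Ns : SemiDir V) (f : V → C) : ℕ :=
  sInf {n | ∃ Tu : UTree V X, Ns.Displays Tu ∧ PSU X f Tu.g = n}

/-!
After a switching every vertex of `N` other than the root has exactly one parent. If `S` embeds
`T` in `N`, choose the switching to contain the reticulation edges of `S`. Every vertex of `S` other
than the root then already has its unique parent in `S`, so no edge of the switched network enters
`S` from outside: the remaining vertices can be deleted sink by sink, and suppressing the
subdivision vertices of `S` gives `T`. Conversely, each cleanup step can be undone inside the
switched network (a suppression by subdividing again), so a subdivision of `T` sits inside `N`; it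
contains the root, since the root is the only vertex without a parent and cleanup never takes the
last parent of a surviving vertex.
-/

namespace Dgraph

variable {V : Type} {G G' H S : Dgraph V} {u v w z : V}

theorem ext (hv : G.verts = H.verts) (he : G.edges = H.edges) : G = H := by
  cases G; cases H; simp_all

theorem inDeg_pos_iff : 0 < G.inDeg v ↔ ∃ u, (u, v) ∈ G.edges := by
  simp only [inDeg, Finset.card_pos, Finset.Nonempty, Finset.mem_filter]
  exact ⟨fun ⟨e, he, hev⟩ => ⟨e.1, hev ▸ he⟩, fun ⟨u, hu⟩ => ⟨(u, v), hu, rfl⟩⟩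

theorem outDeg_eq_zero_iff : G.outDeg v = 0 ↔ ∀ w, (v, w) ∉ G.edges := by
  simp only [outDeg, Finset.card_eq_zero, Finset.filter_eq_empty_iff]
  exact ⟨fun h w hw => h hw rfl, fun h e he hev => h e.2 (hev ▸ he)⟩

theorem inDeg_eq_zero_of_notMem (hv : v ∉ G.verts) : G.inDeg v = 0 := by
  by_contra h
  obtain ⟨u, hu⟩ := inDeg_pos_iff.mp (Nat.pos_of_ne_zero h)
  exact hv (G.edges_sub _ hu).2

theorem inDeg_mono (h : H.edges ⊆ G.edges) (v : V) : H.inDeg v ≤ G.inDeg v :=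
  Finset.card_le_card (Finset.filter_subset_filter _ h)

theorem eq_of_inDeg_le_one (h : G.inDeg v ≤ 1) (hu : (u, v) ∈ G.edges)
    (hw : (w, v) ∈ G.edges) : u = w := by
  have := Finset.card_le_one.mp h (u, v) (Finset.mem_filter.mpr ⟨hu, rfl⟩) (w, v)
    (Finset.mem_filter.mpr ⟨hw, rfl⟩)
  exact congrArg Prod.fst this

theorem Acyclic.mono (hG : G.Acyclic) (h : H.edges ⊆ G.edges) : H.Acyclic :=
  fun u v huv hvu => hG u v (h huv) (Relation.ReflTransGen.mono (fun _ _ hab => h hab) _ _ hvu)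

theorem Acyclic.exists_outDeg_eq_zero (hG : G.Acyclic) {W : Finset V} (hW : W.Nonempty)
    (hclosed : ∀ u w, (u, w) ∈ G.edges → u ∈ W → w ∈ W) : ∃ v ∈ W, G.outDeg v = 0 := by
  -- a vertex of `W` with the fewest descendants in `W` is a sink, by acyclicity
  obtain ⟨v, hvW, hmin⟩ := W.exists_min_image (fun v => (W.filter (G.Reaches v)).card) hW
  refine ⟨v, hvW, outDeg_eq_zero_iff.mpr fun w hvw => ?_⟩
  have hsub : W.filter (G.Reaches w) ⊂ W.filter (G.Reaches v) := by
    refine Finset.ssubset_iff_of_subset (fun x hx => ?_) |>.mpr ⟨v, ?_, ?_⟩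
    · rw [Finset.mem_filter] at hx ⊢
      exact ⟨hx.1, Relation.ReflTransGen.head hvw hx.2⟩
    · exact Finset.mem_filter.mpr ⟨hvW, .refl⟩
    · exact fun hwv => hG v w hvw (Finset.mem_filter.mp hwv).2
  exact (Finset.card_lt_card hsub).not_ge (hmin w (hclosed v w hvw hvW))

def subdivide (G : Dgraph V) (huw : (u, w) ∈ G.edges) (v : V) : Dgraph V where
  verts := insert v G.verts
  edges := insert (u, v) (insert (v, w) (G.edges.erase (u, w)))
  edges_sub := by
    have hu := (G.edges_sub _ huw).1
    have hw := (G.edges_sub _ huw).2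
    intro e he
    simp only [Finset.mem_insert, Finset.mem_erase] at he ⊢
    rcases he with rfl | rfl | ⟨-, he⟩
    · exact ⟨Or.inr hu, Or.inl rfl⟩
    · exact ⟨Or.inl rfl, Or.inr hw⟩
    · exact ⟨Or.inr (G.edges_sub e he).1, Or.inr (G.edges_sub e he).2⟩

theorem subdivStep_subdivide (huw : (u, w) ∈ G.edges) (hv : v ∉ G.verts) :
    SubdivStep G (G.subdivide huw v) :=
  ⟨u, w, v, huw, hv, rfl, rfl⟩

theorem SubdivStep.exists_eq_subdivide (h : SubdivStep G G') :
    ∃ u w v, ∃ huw : (u, w) ∈ G.edges, v ∉ G.verts ∧ G' = G.subdivide huw v := by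
  obtain ⟨u, w, v, huw, hv, hverts, hedges⟩ := h
  exact ⟨u, w, v, huw, hv, ext hverts hedges⟩

theorem inDeg_subdivide (huw : (u, w) ∈ G.edges) (hv : v ∉ G.verts) (z : V) :
    (G.subdivide huw v).inDeg z = if z = v then 1 else G.inDeg z := by
  have hwv : w ≠ v := fun h => hv (h ▸ (G.edges_sub _ huw).2)
  have hnotMem : ∀ x, (v, x) ∉ G.edges := fun x h => hv (G.edges_sub _ h).1
  by_cases hzv : z = v
  · subst hzv
    have hempty : G.edges.filter (fun e => e.2 = z) = ∅ :=
      Finset.filter_eq_empty_iff.mpr fun e he hez => hv (hez ▸ (G.edges_sub e he).2)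
    simp [inDeg, subdivide, Finset.filter_insert, Finset.filter_erase, hempty, hwv]
  rw [if_neg hzv]
  simp only [inDeg, subdivide, Finset.filter_insert, Finset.filter_erase, if_neg (Ne.symm hzv)]
  split_ifs with hwz
  · subst hwz
    have hmem : (u, w) ∈ G.edges.filter (fun e => e.2 = w) := Finset.mem_filter.mpr ⟨huw, rfl⟩
    rw [Finset.card_insert_of_notMem (by simp [hnotMem]), Finset.card_erase_add_one hmem]
  · rw [Finset.erase_eq_of_notMem]
    exact fun h => hwz (Finset.mem_filter.mp h).2

theorem outDeg_subdivide_self (huw : (u, w) ∈ G.edges) (hv : v ∉ G.verts) :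
    (G.subdivide huw v).outDeg v = 1 := by
  have huv : u ≠ v := fun h => hv (h ▸ (G.edges_sub _ huw).1)
  have hempty : G.edges.filter (fun e => e.1 = v) = ∅ :=
    Finset.filter_eq_empty_iff.mpr fun e he hev => hv (hev ▸ (G.edges_sub e he).1)
  simp [outDeg, subdivide, Finset.filter_insert, Finset.filter_erase, hempty, huv]

theorem suppressStep_subdivide (huw : (u, w) ∈ G.edges) (hv : v ∉ G.verts) :
    SuppressStep (G.subdivide huw v) G := by
  have huv : u ≠ v := fun h => hv (h ▸ (G.edges_sub _ huw).1)
  have hwv : w ≠ v := fun h => hv (h ▸ (G.edges_sub _ huw).2)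
  refine ⟨u, v, w, by simp [subdivide], by simp [subdivide], by simp [inDeg_subdivide huw hv],
    outDeg_subdivide_self huw hv, huv, hwv, (Finset.erase_insert hv).symm, ?_⟩
  have hvw : (v, w) ∉ G.edges.erase (u, w) := fun h =>
    hv (G.edges_sub _ (Finset.mem_of_mem_erase h)).1
  have huv' : (u, v) ∉ insert (v, w) (G.edges.erase (u, w)) := by
    simp only [Finset.mem_insert, Prod.mk.injEq, huv, false_and, false_or]
    exact fun h => hv (G.edges_sub _ (Finset.mem_of_mem_erase h)).2
  simp only [subdivide]
  rw [Finset.erase_insert huv', Finset.erase_insert hvw, Finset.insert_erase huw]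

theorem IsSubdivisionOf.verts_subset (h : S.IsSubdivisionOf G) : G.verts ⊆ S.verts := by
  induction h with
  | refl => exact subset_rfl
  | tail _ step ih =>
    obtain ⟨u, w, v, huw, hv, rfl⟩ := step.exists_eq_subdivide
    exact ih.trans (Finset.subset_insert _ _)

theorem IsSubdivisionOf.inDeg (h : S.IsSubdivisionOf G) (z : V) :
    S.inDeg z = if z ∈ S.verts \ G.verts then 1 else G.inDeg z := by
  induction h generalizing z with
  | refl => simp
  | @tail S₁ S₂ hS₁ step ih =>
    obtain ⟨u, w, v, huw, hv, rfl⟩ := step.exists_eq_subdivide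
    have hvG : v ∉ G.verts := fun h => hv (IsSubdivisionOf.verts_subset hS₁ h)
    rw [inDeg_subdivide huw hv, ih]
    by_cases hzv : z = v
    · simp [hzv, hvG, subdivide]
    · simp [hzv, subdivide]

theorem IsSubdivisionOf.reflTransGen_suppressStep (h : S.IsSubdivisionOf G) :
    Relation.ReflTransGen SuppressStep S G := by
  induction h with
  | refl => exact .refl
  | tail _ step ih =>
    obtain ⟨u, w, v, huw, hv, rfl⟩ := step.exists_eq_subdivide
    exact .head (suppressStep_subdivide huw hv) ih

theorem IsSubdivisionOf.inDeg_le_one (hS : S.IsSubdivisionOf G) (hG : ∀ v, G.inDeg v ≤ 1)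
    (v : V) : S.inDeg v ≤ 1 := by
  rw [hS.inDeg]
  split_ifs
  exacts [le_rfl, hG v]

theorem IsSubdivisionOf.inDeg_pos (hS : S.IsSubdivisionOf G) (hz : z ∈ S.verts)
    (hG : z ∈ G.verts → 0 < G.inDeg z) : 0 < S.inDeg z := by
  rw [hS.inDeg]
  split_ifs with h
  · exact one_pos
  · exact hG (by simpa [hz] using h)

end Dgraph

section Cleanup

variable {V : Type} {X : Finset V} {G G' S S' T₀ : Dgraph V} {z : V}

theorem deleteLeafStep_deleteVert {v : V} (hv : v ∈ G.verts) (hvX : v ∉ X)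
    (hsink : G.outDeg v = 0) : DeleteLeafStep X G (G.deleteVert v) := by
  refine ⟨v, hv, hvX, hsink, rfl, Finset.filter_congr fun e he => ?_⟩
  have : e.1 ≠ v := fun h => Dgraph.outDeg_eq_zero_iff.mp hsink e.2 (h ▸ he)
  simp [this]

theorem CleanupStep.verts_subset (h : CleanupStep X G G') : G'.verts ⊆ G.verts := by
  rcases h with ⟨u, v, w, -, -, -, -, -, -, hverts, -⟩ | ⟨v, -, -, -, hverts, -⟩ <;>
    exact hverts ▸ Finset.erase_subset _ _

theorem CleanupStep.inDeg_pos (h : CleanupStep X G G') (hz : z ∈ G'.verts)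
    (hpos : 0 < G.inDeg z) : 0 < G'.inDeg z := by
  obtain ⟨x, hxz⟩ := Dgraph.inDeg_pos_iff.mp hpos
  rw [Dgraph.inDeg_pos_iff]
  rcases h with ⟨u, v, w, -, -, -, -, -, -, hverts, hedges⟩ | ⟨v, -, -, -, hverts, hedges⟩
  · have hzv : z ≠ v := (Finset.mem_erase.mp (hverts ▸ hz)).1
    by_cases hvw : (x, z) = (v, w)
    · exact ⟨u, hedges ▸ by simp [(Prod.mk.inj hvw).2]⟩
    · exact ⟨x, hedges ▸ by simp [hxz, hvw, hzv]⟩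
  · have hzv : z ≠ v := (Finset.mem_erase.mp (hverts ▸ hz)).1
    exact ⟨x, hedges ▸ Finset.mem_filter.mpr ⟨hxz, hzv⟩⟩

theorem verts_subset_of_cleanup (h : Relation.ReflTransGen (CleanupStep X) G G') :
    G'.verts ⊆ G.verts := by
  induction h with
  | refl => exact subset_rfl
  | tail _ step ih => exact (CleanupStep.verts_subset step).trans ih

theorem inDeg_pos_of_cleanup (h : Relation.ReflTransGen (CleanupStep X) G G')
    (hz : z ∈ G'.verts) (hpos : 0 < G.inDeg z) : 0 < G'.inDeg z := by
  induction h with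
  | refl => exact hpos
  | tail _ step ih => exact CleanupStep.inDeg_pos step hz (ih (CleanupStep.verts_subset step hz))

theorem CleanupStep.exists_subdivision_subgraph (h : CleanupStep X G G')
    (hS' : S'.IsSubgraph G') (hsub : S'.IsSubdivisionOf T₀) :
    ∃ S : Dgraph V, S.IsSubgraph G ∧ S.IsSubdivisionOf T₀ := by
  have hverts : S'.verts ⊆ G.verts := hS'.1.trans (CleanupStep.verts_subset h)
  rcases h with ⟨u, v, w, huv, hvw, -, -, -, -, hGverts, hedges⟩ | ⟨v, -, -, -, -, hedges⟩
  · have hS'e : ∀ e ∈ S'.edges, e ≠ (u, w) → e ∈ G.edges := fun e he hne => by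
      have := hedges ▸ hS'.2 he
      simp only [Finset.mem_insert, Finset.mem_erase, hne, false_or] at this
      exact this.2.2
    -- if `S'` uses the edge `(u, w)` created by suppressing `v`, subdivide it by `v` again
    by_cases huw : (u, w) ∈ S'.edges
    · have hv : v ∉ S'.verts := fun hv => (Finset.mem_erase.mp (hGverts ▸ hS'.1 hv)).1 rfl
      refine ⟨S'.subdivide huw v, ⟨?_, ?_⟩, hsub.tail (Dgraph.subdivStep_subdivide huw hv)⟩
      · exact Finset.insert_subset (G.edges_sub _ huv).2 hverts
      · intro e he
        simp only [Dgraph.subdivide, Finset.mem_insert, Finset.mem_erase] at he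
        rcases he with rfl | rfl | ⟨hne, he⟩
        exacts [huv, hvw, hS'e e he hne]
    · exact ⟨S', ⟨hverts, fun e he => hS'e e he (ne_of_mem_of_not_mem he huw)⟩, hsub⟩
  · exact ⟨S', ⟨hverts, fun e he => Finset.mem_of_mem_filter _ (hedges ▸ hS'.2 he)⟩, hsub⟩

theorem exists_subdivision_subgraph_of_cleanup (h : Relation.ReflTransGen (CleanupStep X) G G')
    (hS' : S'.IsSubgraph G') (hsub : S'.IsSubdivisionOf T₀) :
    ∃ S : Dgraph V, S.IsSubgraph G ∧ S.IsSubdivisionOf T₀ := by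
  induction h generalizing S' with
  | refl => exact ⟨S', hS', hsub⟩
  | tail _ step ih =>
    obtain ⟨S₁, hS₁, hsub₁⟩ := CleanupStep.exists_subdivision_subgraph step hS' hsub
    exact ih hS₁ hsub₁

/-- `hSe` says that `S` is an induced subgraph of `G` that no edge enters from outside, so the
vertices outside `S` can be deleted sink by sink. -/
theorem cleanup_of_edges_eq_filter (hG : G.Acyclic) (hSG : S.verts ⊆ G.verts)
    (hSe : S.edges = G.edges.filter (fun e => e.2 ∈ S.verts)) (hX : X ⊆ S.verts) :
    Relation.ReflTransGen (CleanupStep X) G S := by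
  induction hn : (G.verts \ S.verts).card generalizing G with
  | zero =>
    have hverts : G.verts = S.verts :=
      Finset.Subset.antisymm (Finset.sdiff_eq_empty_iff_subset.mp (Finset.card_eq_zero.mp hn)) hSG
    have hedges : G.edges = S.edges :=
      hSe ▸ (Finset.filter_true_of_mem fun e he => hverts ▸ (G.edges_sub e he).2).symm
    exact Dgraph.ext hverts hedges ▸ .refl
  | succ n ih =>
    have hclosed : ∀ u w, (u, w) ∈ G.edges → u ∈ G.verts \ S.verts → w ∈ G.verts \ S.verts := by
      intro u w huw hu
      refine Finset.mem_sdiff.mpr ⟨(G.edges_sub _ huw).2, fun hw => ?_⟩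
      have : (u, w) ∈ S.edges := hSe ▸ Finset.mem_filter.mpr ⟨huw, hw⟩
      exact (Finset.mem_sdiff.mp hu).2 (S.edges_sub _ this).1
    obtain ⟨v, hv, hsink⟩ := hG.exists_outDeg_eq_zero (Finset.card_pos.mp (by omega)) hclosed
    obtain ⟨hvG, hvS⟩ := Finset.mem_sdiff.mp hv
    have hstep : CleanupStep X G (G.deleteVert v) :=
      Or.inr (deleteLeafStep_deleteVert hvG (fun h => hvS (hX h)) hsink)
    refine .head hstep (ih (hG.mono (Finset.filter_subset _ _)) ?_ ?_ ?_)
    · exact fun x hx => Finset.mem_erase.mpr ⟨fun h => hvS (h ▸ hx), hSG hx⟩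
    · have hSv : ∀ e ∈ S.edges, e.1 ≠ v ∧ e.2 ≠ v := fun e he =>
        ⟨fun h => hvS (h ▸ (S.edges_sub e he).1), fun h => hvS (h ▸ (S.edges_sub e he).2)⟩
      ext e
      have := hSv e
      rw [hSe] at this ⊢
      simp only [Dgraph.deleteVert, Finset.mem_filter] at this ⊢
      tauto
    · rw [Dgraph.deleteVert, Finset.erase_sdiff_comm, Finset.card_erase_of_mem hv, hn]
      rfl

end Cleanup

namespace PhyloNet

variable {V : Type} {X : Finset V} {v : V}

theorem inDeg_pos (N : PhyloNet V X) (hv : v ∈ N.G.verts) (hr : v ≠ N.root) :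
    0 < N.G.inDeg v := by
  rcases N.degrees v hv hr with ⟨h, -⟩ | ⟨h, -⟩ | ⟨h, -⟩ <;> omega

theorem inDeg_le_one_of_not_isRetic (N : PhyloNet V X) (hv : ¬ N.IsRetic v) :
    N.G.inDeg v ≤ 1 := by
  by_cases hmem : v ∈ N.G.verts
  · by_cases hr : v = N.root
    · simp [hr, N.root_inDeg]
    · rcases N.degrees v hmem hr with ⟨h, -⟩ | ⟨h, -⟩ | ⟨h, -⟩
      exacts [h.le, absurd h hv, h.le]
  · simp [Dgraph.inDeg_eq_zero_of_notMem hmem]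

theorem IsTreeNet.inDeg_le_one {T : PhyloNet V X} (hT : T.IsTreeNet) (v : V) :
    T.G.inDeg v ≤ 1 := by
  by_cases hmem : v ∈ T.G.verts
  · exact hT v hmem
  · simp [Dgraph.inDeg_eq_zero_of_notMem hmem]

end PhyloNet

section Switching

variable {V : Type} {X : Finset V} {N : PhyloNet V X} {R : Finset (V × V)} {e : V × V} {v : V}

theorem mem_reticEdges : e ∈ reticEdges N ↔ e ∈ N.G.edges ∧ N.IsRetic e.2 :=
  Finset.mem_filter

theorem mem_switchGraph_edges :
    e ∈ (switchGraph N R).edges ↔ e ∈ N.G.edges ∧ (N.IsRetic e.2 → e ∈ R) := by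
  simp only [switchGraph, Finset.mem_sdiff, mem_reticEdges]
  tauto

theorem switchGraph_isSubgraph : (switchGraph N R).IsSubgraph N.G :=
  ⟨subset_rfl, fun _ he => (mem_switchGraph_edges.mp he).1⟩

theorem inDeg_switchGraph_of_not_isRetic (hv : ¬ N.IsRetic v) :
    (switchGraph N R).inDeg v = N.G.inDeg v := by
  unfold Dgraph.inDeg
  congr 1
  ext e
  simp only [Finset.mem_filter, mem_switchGraph_edges]
  constructor
  · exact fun ⟨⟨he, _⟩, hev⟩ => ⟨he, hev⟩
  · rintro ⟨he, rfl⟩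
    exact ⟨⟨he, fun h => absurd h hv⟩, rfl⟩

theorem IsSwitching.inDeg_switchGraph_of_isRetic (hR : IsSwitching N R) (hmem : v ∈ N.G.verts)
    (hv : N.IsRetic v) : (switchGraph N R).inDeg v = 1 := by
  rw [← hR.2 v hmem hv]
  unfold Dgraph.inDeg
  congr 1
  ext e
  simp only [Finset.mem_filter, mem_switchGraph_edges]
  constructor
  · rintro ⟨⟨-, he⟩, rfl⟩
    exact ⟨he hv, rfl⟩
  · rintro ⟨he, rfl⟩
    exact ⟨⟨(mem_reticEdges.mp (hR.1 he)).1, fun _ => he⟩, rfl⟩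

theorem IsSwitching.inDeg_switchGraph_le_one (hR : IsSwitching N R) (v : V) :
    (switchGraph N R).inDeg v ≤ 1 := by
  by_cases hv : N.IsRetic v
  · by_cases hmem : v ∈ N.G.verts
    · exact (hR.inDeg_switchGraph_of_isRetic hmem hv).le
    · simp [Dgraph.inDeg_eq_zero_of_notMem (show v ∉ (switchGraph N R).verts from hmem)]
  · exact inDeg_switchGraph_of_not_isRetic hv ▸ N.inDeg_le_one_of_not_isRetic hv

theorem IsSwitching.inDeg_switchGraph_pos (hR : IsSwitching N R) (hmem : v ∈ N.G.verts)
    (hr : v ≠ N.root) : 0 < (switchGraph N R).inDeg v := by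
  by_cases hv : N.IsRetic v
  · simp [hR.inDeg_switchGraph_of_isRetic hmem hv]
  · exact inDeg_switchGraph_of_not_isRetic hv ▸ N.inDeg_pos hmem hr

theorem exists_isSwitching_superset {A : Finset (V × V)} (hA : A ⊆ reticEdges N)
    (hinj : Set.InjOn Prod.snd (A : Set (V × V))) : ∃ R, IsSwitching N R ∧ A ⊆ R := by
  have hchoice : ∀ v, ∃ e : V × V,
      N.IsRetic v → e ∈ reticEdges N ∧ e.2 = v ∧ ∀ a ∈ A, a.2 = v → a = e := by
    intro v
    by_cases hvA : ∃ a ∈ A, a.2 = v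
    · obtain ⟨a, ha, rfl⟩ := hvA
      exact ⟨a, fun _ => ⟨hA ha, rfl, fun b hb hba => hinj hb ha hba⟩⟩
    · by_cases hv : N.IsRetic v
      · obtain ⟨u, hu⟩ := Dgraph.inDeg_pos_iff.mp (show 0 < N.G.inDeg v by rw [hv]; omega)
        exact ⟨(u, v), fun _ => ⟨mem_reticEdges.mpr ⟨hu, hv⟩, rfl,
          fun a ha hav => absurd ⟨a, ha, hav⟩ hvA⟩⟩
      · exact ⟨(v, v), fun h => absurd h hv⟩
  choose pick hpick using hchoice
  refine ⟨(N.G.verts.filter N.IsRetic).image pick, ⟨?_, fun v hmem hv => ?_⟩, fun a ha => ?_⟩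
  · intro e he
    obtain ⟨v, hv, rfl⟩ := Finset.mem_image.mp he
    exact (hpick v (Finset.mem_filter.mp hv).2).1
  · refine Finset.card_eq_one.mpr ⟨pick v, Finset.eq_singleton_iff_unique_mem.mpr ⟨?_, ?_⟩⟩
    · exact Finset.mem_filter.mpr ⟨Finset.mem_image_of_mem _ (Finset.mem_filter.mpr ⟨hmem, hv⟩),
        (hpick v hv).2.1⟩
    · intro e he
      obtain ⟨⟨w, hw, rfl⟩, hwv⟩ := Finset.mem_filter.mp he |>.imp_left Finset.mem_image.mp
      rw [(hpick w (Finset.mem_filter.mp hw).2).2.1] at hwv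
      rw [hwv]
  · obtain ⟨haN, hav⟩ := mem_reticEdges.mp (hA ha)
    exact Finset.mem_image.mpr ⟨a.2, Finset.mem_filter.mpr ⟨(N.G.edges_sub a haN).2, hav⟩,
      ((hpick a.2 hav).2.2 a ha rfl).symm⟩

end Switching

section Embedding

variable {V : Type} {X : Finset V} {N T : PhyloNet V X} {S : Dgraph V} {R : Finset (V × V)}

theorem PhyloNet.IsEmbedding.root_eq (h : N.IsEmbedding T S) : N.root = T.root := by
  by_contra hne
  have hpos := h.2.2.inDeg_pos h.2.1 fun hmem => T.inDeg_pos hmem hne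
  have := Dgraph.inDeg_mono h.1.2 N.root
  rw [N.root_inDeg] at this
  omega

theorem PhyloNet.IsEmbedding.exists_isSwitching (hT : T.IsTreeNet) (h : N.IsEmbedding T S) :
    ∃ R, IsSwitching N R ∧ S.edges = (switchGraph N R).edges.filter (fun e => e.2 ∈ S.verts) := by
  have hS1 := h.2.2.inDeg_le_one hT.inDeg_le_one
  obtain ⟨R, hR, hSR⟩ := exists_isSwitching_superset (N := N)
    (A := S.edges.filter (· ∈ reticEdges N)) (fun e he => (Finset.mem_filter.mp he).2)
    (fun a ha b hb hab => Prod.ext (Dgraph.eq_of_inDeg_le_one (hS1 _)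
      (Finset.mem_of_mem_filter _ ha) (hab ▸ Finset.mem_of_mem_filter _ hb)) hab)
  have hSsub : ∀ e ∈ S.edges, e ∈ (switchGraph N R).edges := fun e he =>
    mem_switchGraph_edges.mpr ⟨h.1.2 he, fun hr =>
      hSR (Finset.mem_filter.mpr ⟨he, mem_reticEdges.mpr ⟨h.1.2 he, hr⟩⟩)⟩
  -- a vertex of `S` other than the root has its parent in `S`, and that is its only parent
  -- in the switched network
  refine ⟨R, hR, Finset.ext fun e => ⟨fun he => ?_, fun he => ?_⟩⟩
  · exact Finset.mem_filter.mpr ⟨hSsub e he, (S.edges_sub e he).2⟩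
  · obtain ⟨he, hhead⟩ := Finset.mem_filter.mp he
    have hne : e.2 ≠ T.root := by
      intro hroot
      have hpos : 0 < N.G.inDeg N.root :=
        Dgraph.inDeg_pos_iff.mpr ⟨e.1, h.root_eq ▸ hroot ▸ switchGraph_isSubgraph.2 he⟩
      rw [N.root_inDeg] at hpos
      exact lt_irrefl 0 hpos
    obtain ⟨u, hu⟩ := Dgraph.inDeg_pos_iff.mp
      (h.2.2.inDeg_pos hhead fun hmem => T.inDeg_pos hmem hne)
    have := Dgraph.eq_of_inDeg_le_one (hR.inDeg_switchGraph_le_one e.2) (hSsub _ hu) he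
    rw [this] at hu
    exact hu

theorem IsSwitching.root_eq_of_yields (hR : IsSwitching N R) (h : Yields N R T) :
    T.root = N.root := by
  by_contra hne
  have hmem : T.root ∈ N.G.verts := verts_subset_of_cleanup h.2 T.root_mem
  have := inDeg_pos_of_cleanup h.2 T.root_mem (hR.inDeg_switchGraph_pos hmem hne)
  rw [T.root_inDeg] at this
  exact lt_irrefl 0 this

end Embedding

theorem displayed_iff_switching_general {V : Type} {X : Finset V} (N T : PhyloNet V X) :
    N.Displays T ↔ ∃ R : Finset (V × V), IsSwitching N R ∧ Yields N R T := by
  constructor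
  · rintro ⟨hT, S, hemb⟩
    obtain ⟨R, hR, hSe⟩ := hemb.exists_isSwitching hT
    have hXS : X ⊆ S.verts :=
      T.leaves_eq ▸ (Finset.filter_subset _ _).trans hemb.2.2.verts_subset
    have hdelete := cleanup_of_edges_eq_filter
      (N.acyclic.mono switchGraph_isSubgraph.2) hemb.1.1 hSe hXS
    exact ⟨R, hR, hT, hdelete.trans
      (Relation.ReflTransGen.mono (fun _ _ => Or.inl) _ _ hemb.2.2.reflTransGen_suppressStep)⟩
  · rintro ⟨R, hR, hY⟩
    obtain ⟨S, hSsub, hS⟩ :=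
      exists_subdivision_subgraph_of_cleanup hY.2 ⟨subset_rfl, subset_rfl⟩ .refl
    refine ⟨hY.1, S, ⟨hSsub.1, hSsub.2.trans switchGraph_isSubgraph.2⟩, ?_, hS⟩
    exact hR.root_eq_of_yields hY ▸ hS.verts_subset T.root_mem

/-- **Observation 1.** Let `N` be a rooted binary phylogenetic network on `X`, and let `T`
be a phylogenetic `X`-tree. Then `T` is displayed by `N` if and only if there exists a
switching of `N` that yields `T`. -/
theorem displayed_iff_switching {V : Type} {X : Finset V} (N T : PhyloNet V X)
    (hT : T.IsTreeNet) :
    N.Displays T ↔ ∃ R : Finset (V × V), IsSwitching N R ∧ Yields N R T :=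
  displayed_iff_switching_general N T

end
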